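/- Let F_p be a finite field, d₀ ≥ 1, and suppose m₁(x),…,mₙ(x) ∈ F_p[x] are pairwise coprime, each coprime to x^{d₀}, with degrees d₀ ≤ d₁ ≤ … ≤ dₙ. Let t₁ < t₂ be thresholds, let s(x) have deg s < d₀, let f₁(x) = s(x) + α₁(x)x^{d₀} with deg α₁ < Σ_{i=1}^{t₁}dᵢ − d₀, and f₂(x) = s(x) + α₂(x)x^{d₀} with deg α₂ < Σ_{i=1}^{t₂}dᵢ − d₀. Suppose a coalition B of participants holds residues f₂ mod mᵢ for i ∈ B with Σ_{i∈B} dᵢ ≥ Σ_{i=1}^{t₁} dᵢ, and additionally knows the polynomial f₂ − f₁. Then the coalition can compute s(x) exactly; i.e., s(x) is uniquely determined by {f₂ mod mᵢ : i ∈ B} and f₂ − f₁. -/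

import Mathlib

/-! The two first-level shares differ by the published polynomial `f₂ − f₁`, so two
scenarios with the same data have `f₁ − f₁' = f₂ − f₂'`, which the coalition's residues make
divisible by every `mᵢ` (`i ∈ B`). By coprimality it is divisible by `∏_{i∈B} mᵢ`, whose degree
`Σ_{i∈B} dᵢ ≥ Σ_{i≤t₁} dᵢ` exceeds that of `f₁ − f₁'`; hence `f₁ = f₁'`, and `s` is the remainder
of `f₁` modulo `x^{d₀}`. -/

open Polynomial Function

namespace Polynomial

lemma degree_add_mul_X_pow_lt {R : Type*} [Semiring R] {s α : R[X]} {d D : ℕ} (hdD : d ≤ D)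
    (hs : s.degree < d) (hα : α.degree < (D - d : ℕ)) :
    (s + α * X ^ d).degree < (D : WithBot ℕ) := by
  refine (degree_add_le _ _).trans_lt (max_lt (hs.trans_le (by exact_mod_cast hdD)) ?_)
  calc (α * X ^ d).degree ≤ α.degree + d :=
        (degree_mul_le _ _).trans (add_le_add le_rfl (degree_X_pow_le d))
    _ < (D - d : ℕ) + d := WithBot.add_lt_add_right (WithBot.coe_ne_bot) hα
    _ = D := by norm_cast; omega

lemma eq_of_add_mul_X_pow_eq {R : Type*} [CommRing R] {s s' α α' : R[X]} {d : ℕ}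
    (hs : s.degree < d) (hs' : s'.degree < d) (h : s + α * X ^ d = s' + α' * X ^ d) : s = s' := by
  nontriviality R
  have hmod : ∀ {s α : R[X]}, s.degree < d → (s + α * X ^ d) %ₘ X ^ d = s := fun hs ↦ by
    rw [add_modByMonic, mul_self_modByMonic (monic_X_pow d), add_zero,
      (modByMonic_eq_self_iff (monic_X_pow d)).2 (by rwa [degree_X_pow])]
  rw [← hmod (α := α) hs, h, hmod hs']

lemma dvd_sub_of_mod_eq {K : Type*} [Field K] {f g q : K[X]} (h : f % q = g % q) : q ∣ f - g :=
  EuclideanDomain.mod_eq_zero.1 (by rw [sub_mod, h, sub_self])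

theorem eq_of_forall_dvd_sub_of_degree_lt_sum {K ι : Type*} [Field K] {B : Finset ι}
    {m : ι → K[X]} {f g : K[X]} (hcop : (B : Set ι).Pairwise (IsCoprime on m))
    (hdvd : ∀ i ∈ B, m i ∣ f - g)
    (hf : f.degree < ∑ i ∈ B, (m i).natDegree) (hg : g.degree < ∑ i ∈ B, (m i).natDegree) :
    f = g := by
  by_contra hfg
  have hne : f - g ≠ 0 := sub_ne_zero.2 hfg
  have hprod : (∏ i ∈ B, m i) ∣ f - g := Finset.prod_dvd_of_coprime hcop hdvd
  have hm : ∀ i ∈ B, m i ≠ 0 := Finset.prod_ne_zero_iff.1 (ne_zero_of_dvd_ne_zero hne hprod)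
  have hdeg := degree_le_of_dvd hprod hne
  rw [degree_eq_natDegree (Finset.prod_ne_zero_iff.2 hm), natDegree_prod _ _ hm] at hdeg
  exact (hdeg.trans_lt ((degree_sub_le f g).trans_lt (max_lt hf hg))).false

end Polynomial

theorem attack_full_general (p : ℕ) [Fact p.Prime] (d₀ : ℕ)
    (n : ℕ) (m : ℕ → (ZMod p)[X])
    (hcop : ∀ i ∈ Finset.range n, ∀ j ∈ Finset.range n,
      i ≠ j → IsCoprime (m i) (m j))
    (hdle : ∀ i ∈ Finset.range n, d₀ ≤ (m i).natDegree)
    (t₁ t₂ : ℕ) (ht₁ : 1 ≤ t₁) (ht : t₁ < t₂) (ht₂ : t₂ ≤ n)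
    (s s' α₁ α₁' α₂ α₂' : (ZMod p)[X])
    (hs : s.degree < (d₀ : ℕ)) (hs' : s'.degree < (d₀ : ℕ))
    (hα₁ : α₁.degree <
      ((∑ i ∈ Finset.range t₁, (m i).natDegree - d₀ : ℕ) : WithBot ℕ))
    (hα₁' : α₁'.degree <
      ((∑ i ∈ Finset.range t₁, (m i).natDegree - d₀ : ℕ) : WithBot ℕ))
    (B : Finset ℕ) (hB : B ⊆ Finset.range n)
    (hBsum : ∑ i ∈ Finset.range t₁, (m i).natDegree ≤
      ∑ i ∈ B, (m i).natDegree)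
    -- the coalition's data coincides for the two scenarios:
    (hres : ∀ i ∈ B,
      (s + α₂ * X ^ d₀) % m i = (s' + α₂' * X ^ d₀) % m i)
    (hdiff : (s + α₂ * X ^ d₀) - (s + α₁ * X ^ d₀) =
      (s' + α₂' * X ^ d₀) - (s' + α₁' * X ^ d₀)) :
    s = s' := by
  set D := ∑ i ∈ Finset.range t₁, (m i).natDegree
  have hd₀D : d₀ ≤ D := (hdle 0 (Finset.mem_range.2 (by omega))).trans
    (Finset.single_le_sum (f := fun i ↦ (m i).natDegree) (fun _ _ ↦ Nat.zero_le _)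
      (Finset.mem_range.2 ht₁))
  have hf₁ : s + α₁ * X ^ d₀ = s' + α₁' * X ^ d₀ := by
    refine eq_of_forall_dvd_sub_of_degree_lt_sum (B := B) (m := m)
      (fun i hi j hj hij ↦ hcop i (hB hi) j (hB hj) hij) (fun i hi ↦ ?_)
      ((degree_add_mul_X_pow_lt hd₀D hs hα₁).trans_le (by exact_mod_cast hBsum))
      ((degree_add_mul_X_pow_lt hd₀D hs' hα₁').trans_le (by exact_mod_cast hBsum))
    have hsame : (s + α₁ * X ^ d₀) - (s' + α₁' * X ^ d₀) =
        (s + α₂ * X ^ d₀) - (s' + α₂' * X ^ d₀) := by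
      linear_combination -hdiff
    rw [hsame]
    exact dvd_sub_of_mod_eq (hres i hi)
  exact eq_of_add_mul_X_pow_eq hs hs' hf₁

/-- Full attack on the Yang et al. scheme: a coalition `B` holding the
residues `f₂ mod mᵢ` (`i ∈ B`) with `Σ_{i∈B} dᵢ ≥ Σ_{i=1}^{t₁} dᵢ`, and
knowing the polynomial `f₂ − f₁`, determines the secret `s` exactly: any
other choice of secret and masks producing the same data yields the same
secret. -/
theorem attack_full (p : ℕ) [Fact p.Prime] (d₀ : ℕ) (hd₀ : 1 ≤ d₀)
    (n : ℕ) (m : ℕ → (ZMod p)[X])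
    (hcop : ∀ i ∈ Finset.range n, ∀ j ∈ Finset.range n,
      i ≠ j → IsCoprime (m i) (m j))
    (hcop₀ : ∀ i ∈ Finset.range n, IsCoprime (m i) (X ^ d₀))
    (hdle : ∀ i ∈ Finset.range n, d₀ ≤ (m i).natDegree)
    (hsort : ∀ i j, i ≤ j → j < n → (m i).natDegree ≤ (m j).natDegree)
    (t₁ t₂ : ℕ) (ht₁ : 1 ≤ t₁) (ht : t₁ < t₂) (ht₂ : t₂ ≤ n)
    (s s' α₁ α₁' α₂ α₂' : (ZMod p)[X])
    (hs : s.degree < (d₀ : ℕ)) (hs' : s'.degree < (d₀ : ℕ))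
    (hα₁ : α₁.degree <
      ((∑ i ∈ Finset.range t₁, (m i).natDegree - d₀ : ℕ) : WithBot ℕ))
    (hα₁' : α₁'.degree <
      ((∑ i ∈ Finset.range t₁, (m i).natDegree - d₀ : ℕ) : WithBot ℕ))
    (hα₂ : α₂.degree <
      ((∑ i ∈ Finset.range t₂, (m i).natDegree - d₀ : ℕ) : WithBot ℕ))
    (hα₂' : α₂'.degree <
      ((∑ i ∈ Finset.range t₂, (m i).natDegree - d₀ : ℕ) : WithBot ℕ))
    (B : Finset ℕ) (hB : B ⊆ Finset.range n)
    (hBsum : ∑ i ∈ Finset.range t₁, (m i).natDegree ≤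
      ∑ i ∈ B, (m i).natDegree)
    -- the coalition's data coincides for the two scenarios:
    (hres : ∀ i ∈ B,
      (s + α₂ * X ^ d₀) % m i = (s' + α₂' * X ^ d₀) % m i)
    (hdiff : (s + α₂ * X ^ d₀) - (s + α₁ * X ^ d₀) =
      (s' + α₂' * X ^ d₀) - (s' + α₁' * X ^ d₀)) :
    s = s' :=
  attack_full_general p d₀ n m hcop hdle t₁ t₂ ht₁ ht ht₂ s s' α₁ α₁' α₂ α₂' hs hs' hα₁ hα₁' B hB
    hBsum hres hdiff
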